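/- arXiv:1509.06288 — 3 statements merged into one kernel-verified Lean document; each statement's English description precedes it below -/
import Mathlib

section
/- The class of x^2 y^3 in the Milnor algebra C[x,y,z]/(∂f) of f = x^5 + y^4 z + x^4 y is a nonzero element annihilated by the maximal ideal (x,y,z): each of x·x^2y^3, y·x^2y^3, z·x^2y^3 lies in the Jacobian ideal while x^2y^3 does not. -/
/-!
The Jacobian ideal is `(5x⁴ + 4x³y, x⁴ + 4y³z, y⁴)`. Multiplying `x²y³` by `x`, `y` or `z` lands
in it by explicit combinations of the generators. On the other hand every generator lies in the
monomial ideal `(x³, y³z, y⁴)`, and none of these three monomials divides `x²y³`.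
-/

open MvPolynomial

theorem MvPolynomial.monomial_one_notMem_span_monomial_image {σ R : Type*} [CommSemiring R]
    [Nontrivial R] {s : Set (σ →₀ ℕ)} {m : σ →₀ ℕ} (h : ∀ d ∈ s, ¬ d ≤ m) :
    monomial m (1 : R) ∉ Ideal.span ((monomial · (1 : R)) '' s) := by
  classical
  rw [mem_ideal_span_monomial_image, support_monomial, if_neg one_ne_zero]
  simpa using h

theorem isUnit_ofNat_of_algebra_rat {A : Type*} [Ring A] [Algebra ℚ A] (n : ℕ) [n.AtLeastTwo] :
    IsUnit (OfNat.ofNat n : A) := by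
  rw [← map_ofNat (algebraMap ℚ A) n]
  exact (IsUnit.mk0 _ (NeZero.ne _)).map _

namespace QuinticJacobian

local notation "𝒥" =>
  Ideal.span {5 * X 0 ^ 4 + 4 * X 0 ^ 3 * X 1, X 0 ^ 4 + 4 * X 1 ^ 3 * X 2, X 1 ^ 4}

variable {R : Type*} [CommRing R]

theorem span_pderiv_eq :
    let f : MvPolynomial (Fin 3) R := X 0 ^ 5 + X 1 ^ 4 * X 2 + X 0 ^ 4 * X 1
    Ideal.span {pderiv 0 f, pderiv 1 f, pderiv 2 f} = 𝒥 := by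
  intro f
  simp only [f, map_add, Derivation.leibniz, Derivation.leibniz_pow, pderiv_X, Pi.single_apply,
    Fin.reduceEq, ↓reduceIte, smul_eq_mul, nsmul_eq_mul, Nat.cast_ofNat]
  ring_nf

theorem X_zero_mul_mem [Algebra ℚ R] :
    (X 0 * (X 0 ^ 2 * X 1 ^ 3) : MvPolynomial (Fin 3) R) ∈ 𝒥 := by
  rw [← Ideal.unit_mul_mem_iff_mem _ (isUnit_ofNat_of_algebra_rat 4)]
  exact Submodule.mem_span_triple.2
    ⟨X 1 ^ 2, -5 * X 1 ^ 2, 20 * X 1 * X 2, by simp only [smul_eq_mul]; ring⟩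

theorem X_one_mul_mem : (X 1 * (X 0 ^ 2 * X 1 ^ 3) : MvPolynomial (Fin 3) R) ∈ 𝒥 :=
  Submodule.mem_span_triple.2 ⟨0, 0, X 0 ^ 2, by simp only [smul_eq_mul]; ring⟩

theorem X_two_mul_mem [Algebra ℚ R] :
    (X 2 * (X 0 ^ 2 * X 1 ^ 3) : MvPolynomial (Fin 3) R) ∈ 𝒥 := by
  rw [← Ideal.unit_mul_mem_iff_mem _ (isUnit_ofNat_of_algebra_rat 100)]
  exact Submodule.mem_span_triple.2
    ⟨-5 * X 0 ^ 2 + 4 * X 0 * X 1, 25 * X 0 ^ 2 - 16 * X 1 ^ 2, 64 * X 1 * X 2,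
      by simp only [smul_eq_mul]; ring⟩

theorem span_le_span_monomial :
    (𝒥 : Ideal (MvPolynomial (Fin 3) R)) ≤ Ideal.span ((monomial · (1 : R)) ''
      {Finsupp.single 0 3, Finsupp.single 1 3 + Finsupp.single 2 1, Finsupp.single 1 4}) := by
  have hyz : monomial (Finsupp.single 1 3 + Finsupp.single 2 1) (1 : R) =
      (X 1 ^ 3 * X 2 : MvPolynomial (Fin 3) R) := by
    rw [X_pow_eq_monomial, X, monomial_mul, one_mul]
  simp only [Set.image_insert_eq, Set.image_singleton, hyz, ← X_pow_eq_monomial, Ideal.span_le,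
    Set.insert_subset_iff, Set.singleton_subset_iff, SetLike.mem_coe, Submodule.mem_span_triple,
    smul_eq_mul]
  exact ⟨⟨5 * X 0 + 4 * X 1, 0, 0, by ring⟩, ⟨X 0, 4, 0, by ring⟩, ⟨0, 0, 1, by ring⟩⟩

theorem X_zero_sq_mul_X_one_pow_three_notMem [Nontrivial R] :
    (X 0 ^ 2 * X 1 ^ 3 : MvPolynomial (Fin 3) R) ∉ 𝒥 := by
  have hm : monomial (Finsupp.single 0 2 + Finsupp.single 1 3) (1 : R) =
      (X 0 ^ 2 * X 1 ^ 3 : MvPolynomial (Fin 3) R) := by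
    rw [X_pow_eq_monomial, X_pow_eq_monomial, monomial_mul, one_mul]
  rw [← hm]
  refine fun h ↦ monomial_one_notMem_span_monomial_image ?_ (span_le_span_monomial h)
  simp only [Set.mem_insert_iff, Set.mem_singleton_iff]
  rintro d (rfl | rfl | rfl) hd
  · simpa using hd 0
  · simpa using hd 2
  · simpa using hd 1

end QuinticJacobian

theorem stmt3 (x y z f : MvPolynomial (Fin 3) ℂ)
    (hx : x = X 0) (hy : y = X 1) (hz : z = X 2)
    (hf : f = x ^ 5 + y ^ 4 * z + x ^ 4 * y) :
    x * (x ^ 2 * y ^ 3) ∈ Ideal.span {pderiv 0 f, pderiv 1 f, pderiv 2 f} ∧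
    y * (x ^ 2 * y ^ 3) ∈ Ideal.span {pderiv 0 f, pderiv 1 f, pderiv 2 f} ∧
    z * (x ^ 2 * y ^ 3) ∈ Ideal.span {pderiv 0 f, pderiv 1 f, pderiv 2 f} ∧
    x ^ 2 * y ^ 3 ∉ Ideal.span {pderiv 0 f, pderiv 1 f, pderiv 2 f} := by
  subst hx hy hz hf
  rw [QuinticJacobian.span_pderiv_eq]
  exact ⟨QuinticJacobian.X_zero_mul_mem, QuinticJacobian.X_one_mul_mem,
    QuinticJacobian.X_two_mul_mem, QuinticJacobian.X_zero_sq_mul_X_one_pow_three_notMem⟩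
end

section
/- The plane curve h = x^5 + x^4 y + y^4 has Tjurina number τ = 11 at the origin, i.e., dim_C C[[x,y]]/(h, h_x, h_y) = 11. -/
/-!
Modulo `(h, h_x, h_y)` one has `y⁴ ≡ xy³ ≡ 0`, `x⁴ ≡ -4y³`, `x³y ≡ 5y³`, and every monomial of
degree 5 vanishes, so each series reduces to a combination of the eleven monomials
`1, x, x², x³, y, xy, x²y, y², xy², x²y², y³`. They stay independent in the quotient: the ten
matching coefficients together with `c₀₃ - 4c₄₀ + 5c₃₁` are linear functionals killing every
multiple of each generator, hence the whole ideal.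
-/

open MvPowerSeries Finsupp

noncomputable section

theorem Ideal.finrank_quotient_eq_card_of_normalForm {k R ι : Type*} [Field k] [CommRing R]
    [Algebra k R] [Fintype ι] (I : Ideal R) (b : ι → R) (Φ : R →ₗ[k] ι → k)
    (hΦI : ∀ z ∈ I, Φ z = 0) (hΦb : ∀ c, Φ (∑ j, c j • b j) = c)
    (hnf : ∀ f, f - ∑ j, Φ f j • b j ∈ I) :
    Module.finrank k (R ⧸ I) = Fintype.card ι := by
  let q := (Ideal.Quotient.mkₐ k I).toLinearMap ∘ₗ Fintype.linearCombination k b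
  have hq : Function.Bijective q := by
    refine ⟨(injective_iff_map_eq_zero q).2 fun c hc => ?_, fun f => ?_⟩
    · rw [← hΦb c]
      exact hΦI _ (Ideal.Quotient.eq_zero_iff_mem.1
        (by simpa [q, Fintype.linearCombination_apply] using hc))
    · obtain ⟨f, rfl⟩ := Ideal.Quotient.mk_surjective f
      exact ⟨Φ f, by
        simpa [q, Fintype.linearCombination_apply] using (Ideal.Quotient.eq.2 (hnf f)).symm⟩
  rw [← (LinearEquiv.ofBijective q hq).finrank_eq, Module.finrank_fintype_fun_eq_card]

theorem Ideal.apply_eq_zero_of_mem_span {R M F : Type*} [CommSemiring R] [AddCommMonoid M]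
    [FunLike F R M] [AddMonoidHomClass F R M] (φ : F) {S : Set R}
    (hS : ∀ s ∈ S, ∀ g, φ (g * s) = 0) {z : R} (hz : z ∈ Ideal.span S) : φ z = 0 := by
  suffices ∀ g, φ (g * z) = 0 by simpa using this 1
  induction hz using Submodule.span_induction with
  | mem s hs => exact hS s hs
  | zero => simp
  | add x y _ _ hx hy => intro g; rw [mul_add, map_add, hx, hy, add_zero]
  | smul a x _ hx => intro g; rw [smul_eq_mul, ← mul_assoc]; exact hx _

theorem MvPowerSeries.mem_ideal_of_coeff_eq_zero_of_degree_lt {R : Type*} [CommSemiring R] {n : ℕ}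
    {I : Ideal (MvPowerSeries (Fin 2) R)} (hI : ∀ a b, a + b = n → X 0 ^ a * X 1 ^ b ∈ I)
    {t : MvPowerSeries (Fin 2) R} (ht : ∀ e : Fin 2 →₀ ℕ, e 0 + e 1 < n → coeff e t = 0) :
    t ∈ I := by
  induction n generalizing I t with
  | zero =>
    have h1 : (1 : MvPowerSeries (Fin 2) R) ∈ I := by simpa using hI 0 0 rfl
    simpa using I.mul_mem_left t h1
  | succ n ih =>
    -- `t = X 0 * A + B` with `B` a series in `X 1` alone, hence divisible by `X 1 ^ (n + 1)`
    let A : MvPowerSeries (Fin 2) R := fun e => coeff (e + single 0 1) t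
    let B : MvPowerSeries (Fin 2) R := fun e => if e 0 = 0 then coeff e t else 0
    have hsplit : t = X 0 * A + B := by
      ext e
      have hB : coeff e B = if e 0 = 0 then coeff e t else 0 := rfl
      rw [map_add, X, coeff_monomial_mul, hB]
      by_cases h0 : e 0 = 0
      · simp [h0]
      · rw [if_pos (single_le_iff.2 (by omega)), if_neg h0, add_zero, one_mul]
        exact congrArg (coeff · t) (tsub_add_cancel_of_le (single_le_iff.2 (by omega))).symm
    have hA : A ∈ I.colon {X 0} :=
      ih (fun a b hab => Submodule.mem_colon_singleton.2 (by
          simpa [pow_succ, mul_right_comm] using hI (a + 1) b (by omega)))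
        (fun e he => ht _ (by simp; omega))
    have hB : X 1 ^ (n + 1) ∣ B := X_pow_dvd_iff.2 fun e he => by
      show (if e 0 = 0 then coeff e t else 0) = 0
      split_ifs with h0
      · exact ht e (by omega)
      · rfl
    rw [hsplit]
    refine add_mem ?_ (Ideal.mem_of_dvd _ hB (by simpa using hI 0 (n + 1) (zero_add _)))
    rw [mul_comm]; exact Submodule.mem_colon_singleton.1 hA

def bideg (a b : ℕ) : Fin 2 →₀ ℕ := single 0 a + single 1 b

@[simp] lemma bideg_apply_zero (a b : ℕ) : bideg a b 0 = a := by simp [bideg]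

@[simp] lemma bideg_apply_one (a b : ℕ) : bideg a b 1 = b := by simp [bideg]

lemma eq_bideg (e : Fin 2 →₀ ℕ) : e = bideg (e 0) (e 1) := by
  ext i; fin_cases i <;> simp

@[simp] lemma bideg_le_bideg {a b c d : ℕ} : bideg a b ≤ bideg c d ↔ a ≤ c ∧ b ≤ d := by
  simp [Finsupp.le_def, Fin.forall_fin_two]

@[simp] lemma bideg_sub_bideg (a b c d : ℕ) : bideg a b - bideg c d = bideg (a - c) (b - d) := by
  ext i; fin_cases i <;> simp

@[simp] lemma bideg_inj {a b c d : ℕ} : bideg a b = bideg c d ↔ a = c ∧ b = d := by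
  simp [Finsupp.ext_iff, Fin.forall_fin_two]

lemma monomial_bideg {R : Type*} [CommSemiring R] (a b : ℕ) (r : R) :
    monomial (bideg a b) r = C r * X 0 ^ a * X 1 ^ b := by
  rw [X_pow_eq, X_pow_eq, ← monomial_zero_eq_C_apply, monomial_mul_monomial,
    monomial_mul_monomial, mul_one, mul_one, zero_add, bideg]

namespace Tjurina

local notation "𝒪" => MvPowerSeries (Fin 2) ℂ

def h : 𝒪 := X 0 ^ 5 + X 0 ^ 4 * X 1 + X 1 ^ 4
def hx : 𝒪 := 5 * X 0 ^ 4 + 4 * X 0 ^ 3 * X 1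
def hy : 𝒪 := X 0 ^ 4 + 4 * X 1 ^ 3

def ideal : Ideal 𝒪 := Ideal.span {h, hx, hy}

lemma h_eq_sum_monomial :
    h = monomial (bideg 5 0) 1 + monomial (bideg 4 1) 1 + monomial (bideg 0 4) 1 := by
  simp only [h, monomial_bideg, map_one]; ring

lemma hx_eq_sum_monomial : hx = monomial (bideg 4 0) 5 + monomial (bideg 3 1) 4 := by
  simp only [hx, monomial_bideg, map_ofNat]; ring

lemma hy_eq_sum_monomial : hy = monomial (bideg 4 0) 1 + monomial (bideg 0 3) 4 := by
  simp only [hy, monomial_bideg, map_one, map_ofNat]; ring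

lemma mem_ideal_of_natCast_mul_eq {z : 𝒪} (n : ℕ) (hn : n ≠ 0) (a b c : 𝒪)
    (hz : n * z = a * h + b * hx + c * hy) : z ∈ ideal := by
  have hunit : IsUnit (n : 𝒪) := by
    simpa using (Nat.cast_ne_zero.2 hn : (n : ℂ) ≠ 0).isUnit.map (algebraMap ℂ 𝒪)
  rw [← Ideal.unit_mul_mem_iff_mem _ hunit, hz]
  refine add_mem (add_mem ?_ ?_) ?_ <;> exact Ideal.mul_mem_left _ _ (Ideal.subset_span (by simp))

lemma X_pow_mul_X_pow_mem_ideal {a b : ℕ} (hab : a + b = 5) : X 0 ^ a * X 1 ^ b ∈ ideal := by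
  obtain rfl : b = 5 - a := by omega
  have ha : a ≤ 5 := by omega
  interval_cases a
  · exact mem_ideal_of_natCast_mul_eq 1 one_ne_zero (5 * X 1) (-(X 0 * X 1)) (-X 1 ^ 2)
      (by simp only [h, hx, hy]; ring)
  · exact mem_ideal_of_natCast_mul_eq 1 one_ne_zero (5 * X 0) (-X 0 ^ 2) (-(X 0 * X 1))
      (by simp only [h, hx, hy]; ring)
  · exact mem_ideal_of_natCast_mul_eq 20 (by norm_num) (-80 * X 0) (15 * X 0 ^ 2)
      (20 * X 0 * X 1 + 5 * X 0 ^ 2) (by simp only [h, hx, hy]; push_cast; ring)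
  · exact mem_ideal_of_natCast_mul_eq 4 (by norm_num) 100 (X 1 - 20 * X 0) (-(25 * X 1))
      (by simp only [h, hx, hy]; push_cast; ring)
  · exact mem_ideal_of_natCast_mul_eq 1 one_ne_zero (-20) (4 * X 0) (5 * X 1)
      (by simp only [h, hx, hy]; ring)
  · exact mem_ideal_of_natCast_mul_eq 1 one_ne_zero 16 (-(3 * X 0)) (-(4 * X 1))
      (by simp only [h, hx, hy]; ring)

lemma monomial_one_three_mem_ideal : monomial (bideg 1 3) (1 : ℂ) ∈ ideal :=
  mem_ideal_of_natCast_mul_eq 20 (by norm_num) (-80) (15 * X 0) (20 * X 1 + 5 * X 0)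
    (by simp only [h, hx, hy, monomial_bideg, map_one]; push_cast; ring)

lemma monomial_zero_four_mem_ideal : monomial (bideg 0 4) (1 : ℂ) ∈ ideal :=
  mem_ideal_of_natCast_mul_eq 1 one_ne_zero 5 (-X 0) (-X 1)
    (by simp only [h, hx, hy, monomial_bideg, map_one]; push_cast; ring)

lemma monomial_three_one_sub_mem_ideal :
    monomial (bideg 3 1) (1 : ℂ) - monomial (bideg 0 3) 5 ∈ ideal :=
  mem_ideal_of_natCast_mul_eq 4 (by norm_num) 0 1 (-5)
    (by simp only [h, hx, hy, monomial_bideg, map_one, map_ofNat]; push_cast; ring)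

def normalCoords : 𝒪 →ₗ[ℂ] Fin 11 → ℂ := LinearMap.pi
  ![coeff (bideg 0 0), coeff (bideg 1 0), coeff (bideg 2 0), coeff (bideg 3 0),
    coeff (bideg 0 1), coeff (bideg 1 1), coeff (bideg 2 1), coeff (bideg 0 2),
    coeff (bideg 1 2), coeff (bideg 2 2),
    coeff (bideg 0 3) - (4 : ℂ) • coeff (bideg 4 0) + (5 : ℂ) • coeff (bideg 3 1)]

def normalBasis : Fin 11 → 𝒪 :=
  ![monomial (bideg 0 0) 1, monomial (bideg 1 0) 1, monomial (bideg 2 0) 1,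
    monomial (bideg 3 0) 1, monomial (bideg 0 1) 1, monomial (bideg 1 1) 1,
    monomial (bideg 2 1) 1, monomial (bideg 0 2) 1, monomial (bideg 1 2) 1,
    monomial (bideg 2 2) 1, monomial (bideg 0 3) 1]

lemma normalCoords_mul_generator {s : 𝒪} (hs : s ∈ ({h, hx, hy} : Set 𝒪)) (g : 𝒪) :
    normalCoords (g * s) = 0 := by
  rcases hs with rfl | rfl | rfl <;> ext i <;> fin_cases i <;>
    simp [normalCoords, h_eq_sum_monomial, hx_eq_sum_monomial, hy_eq_sum_monomial, mul_add,
      coeff_mul_monomial] <;> ring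

lemma normalCoords_sum_smul_normalBasis (c : Fin 11 → ℂ) :
    normalCoords (∑ j, c j • normalBasis j) = c := by
  ext i; fin_cases i <;> simp [normalCoords, normalBasis, Fin.sum_univ_succ, coeff_monomial]

lemma sub_normalForm_mem_ideal (f : 𝒪) : f - ∑ j, normalCoords f j • normalBasis j ∈ ideal := by
  set correction : 𝒪 := coeff (bideg 4 0) f • hy +
    coeff (bideg 3 1) f • (monomial (bideg 3 1) 1 - monomial (bideg 0 3) 5) +
    coeff (bideg 1 3) f • monomial (bideg 1 3) 1 + coeff (bideg 0 4) f • monomial (bideg 0 4) 1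
  have hcorrection : correction ∈ ideal := by
    refine add_mem (add_mem (add_mem ?_ ?_) ?_) ?_ <;> refine Submodule.smul_of_tower_mem _ _ ?_
    exacts [Ideal.subset_span (by simp), monomial_three_one_sub_mem_ideal,
      monomial_one_three_mem_ideal, monomial_zero_four_mem_ideal]
  have htail : f - ∑ j, normalCoords f j • normalBasis j - correction ∈ ideal := by
    refine mem_ideal_of_coeff_eq_zero_of_degree_lt (fun _ _ => X_pow_mul_X_pow_mem_ideal)
      fun e he => ?_
    rw [eq_bideg e]
    generalize e 0 = a, e 1 = b at he
    have ha : a ≤ 4 := by omega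
    have hb : b ≤ 4 := by omega
    interval_cases a <;> interval_cases b <;> try omega
    all_goals simp [correction, normalCoords, normalBasis, hy_eq_sum_monomial, Fin.sum_univ_succ,
      coeff_monomial]
    ring
  simpa using add_mem htail hcorrection

theorem finrank_quotient_ideal : Module.finrank ℂ (𝒪 ⧸ ideal) = 11 :=
  Ideal.finrank_quotient_eq_card_of_normalForm ideal normalBasis normalCoords
    (fun _ hz => Ideal.apply_eq_zero_of_mem_span normalCoords
      (fun _ hs g => normalCoords_mul_generator hs g) hz)
    normalCoords_sum_smul_normalBasis sub_normalForm_mem_ideal |>.trans (Fintype.card_fin 11)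

end Tjurina

end

theorem stmt5 (x y h hx hy : MvPowerSeries (Fin 2) ℂ)
    (hxd : x = X 0) (hyd : y = X 1)
    (hh : h = x ^ 5 + x ^ 4 * y + y ^ 4)
    (hhx : hx = 5 * x ^ 4 + 4 * x ^ 3 * y) (hhy : hy = x ^ 4 + 4 * y ^ 3) :
    Module.finrank ℂ (MvPowerSeries (Fin 2) ℂ ⧸ Ideal.span {h, hx, hy}) = 11 := by
  subst hxd hyd hh hhx hhy
  exact Tjurina.finrank_quotient_ideal
end

section
/- For f = x^5 + y^4 z + x^4 y, with η = (x^3/y) dx + (1/5)(x^3/y) dy, the 2-form ξ = df ∧ η has polynomial coefficients, and dξ = -df ∧ dη = c1 x^3 y^2 dx∧dy∧dz + c2 x^2 y^3 dx∧dy∧dz for some nonzero constants c1, c2. Concretely: f_y ∂_z(x^3/y) - f_z ∂_y(x^3/y) = x^3 y^2 and f_x ∂_z(x^3/(5y)) - f_z ∂_x(x^3/(5y)) = -(3/5) x^2 y^3. -/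
/-! The `dx∧dy` coefficient of `df ∧ η` is `(x^3/y)(f_x/5 - f_y)`, where the pole along `y = 0`
cancels because `f_x/5` and `f_y` share the leading term `x^4`; the two other coefficients carry
the factor `f_z = y^4`. -/

open MvPolynomial

theorem df_wedge_eta_coeffs_polynomial :
    ∃ P Q R : MvPolynomial (Fin 3) ℂ, ∀ x y z : ℂ, y ≠ 0 →
      ((5 * x ^ 4 + 4 * x ^ 3 * y) * ((1 / 5) * x ^ 3 / y)
          - (x ^ 4 + 4 * y ^ 3 * z) * (x ^ 3 / y) = eval (fun i => ![x, y, z] i) P) ∧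
      (-(y ^ 4) * (x ^ 3 / y) = eval (fun i => ![x, y, z] i) Q) ∧
      (-(y ^ 4) * ((1 / 5) * x ^ 3 / y) = eval (fun i => ![x, y, z] i) R) := by
  refine ⟨C (4 / 5) * X 0 ^ 6 - C 4 * X 0 ^ 3 * X 1 ^ 2 * X 2, -(X 0 ^ 3 * X 1 ^ 3),
    -(C (1 / 5) * X 0 ^ 3 * X 1 ^ 3), fun x y z hy => ?_⟩
  simp only [eval_sub, eval_neg, eval_mul, eval_pow, eval_C, eval_X, Matrix.cons_val_zero,
    Matrix.cons_val_one, Matrix.cons_val_two, Matrix.head_cons, Matrix.tail_cons]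
  exact ⟨by field_simp; ring, by field_simp, by field_simp⟩

theorem fy_mul_deriv_sub_fz_mul_deriv_eq (x y z : ℂ) :
    (x ^ 4 + 4 * y ^ 3 * z) * deriv (fun _ : ℂ => x ^ 3 / y) z
      - y ^ 4 * deriv (fun y' : ℂ => x ^ 3 / y') y = x ^ 3 * y ^ 2 := by
  rw [deriv_const, deriv_const_div_id]
  field_simp
  ring

theorem fx_mul_deriv_sub_fz_mul_deriv_eq (x y z : ℂ) :
    (5 * x ^ 4 + 4 * x ^ 3 * y) * deriv (fun _ : ℂ => (1 / 5) * x ^ 3 / y) z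
      - y ^ 4 * deriv (fun x' : ℂ => (1 / 5) * x' ^ 3 / y) x = -(3 / 5) * x ^ 2 * y ^ 3 := by
  rw [deriv_const, deriv_div_const, deriv_const_mul_field, deriv_pow_field]
  field_simp
  ring

/-- For `f = x^5 + y^4 z + x^4 y`, with `η = (x^3/y) dx + (1/5)(x^3/y) dy`, the 2-form
`ξ = df ∧ η` has polynomial coefficients (its `dx∧dy`, `dx∧dz`, `dy∧dz` components are given
by polynomials), and the two derivative identities computing `dξ = -df ∧ dη` hold, so that
`dξ = c₁ x^3 y^2 dx∧dy∧dz + c₂ x^2 y^3 dx∧dy∧dz` with `c₁, c₂ ≠ 0`. -/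
theorem stmt11 :
    (∃ P Q R : MvPolynomial (Fin 3) ℂ, ∀ x y z : ℂ, y ≠ 0 →
      -- fx = 5x^4+4x^3y, fy = x^4+4y^3z, fz = y^4, g1 = x^3/y, g2 = (1/5)x^3/y
      ((5 * x ^ 4 + 4 * x ^ 3 * y) * ((1 / 5) * x ^ 3 / y)
          - (x ^ 4 + 4 * y ^ 3 * z) * (x ^ 3 / y)
          = MvPolynomial.eval (fun i => ![x, y, z] i) P) ∧
      (- (y ^ 4) * (x ^ 3 / y) = MvPolynomial.eval (fun i => ![x, y, z] i) Q) ∧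
      (- (y ^ 4) * ((1 / 5) * x ^ 3 / y) = MvPolynomial.eval (fun i => ![x, y, z] i) R)) ∧
    (∀ x y z : ℂ, y ≠ 0 →
      (x ^ 4 + 4 * y ^ 3 * z) * deriv (fun _ : ℂ => x ^ 3 / y) z
          - y ^ 4 * deriv (fun y' : ℂ => x ^ 3 / y') y = x ^ 3 * y ^ 2) ∧
    (∀ x y z : ℂ, y ≠ 0 →
      (5 * x ^ 4 + 4 * x ^ 3 * y) * deriv (fun _ : ℂ => (1 / 5) * x ^ 3 / y) z
          - y ^ 4 * deriv (fun x' : ℂ => (1 / 5) * x' ^ 3 / y) x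
          = -(3 / 5) * x ^ 2 * y ^ 3) ∧
    (∃ c1 c2 : ℂ, c1 ≠ 0 ∧ c2 ≠ 0 ∧ ∀ x y z : ℂ, y ≠ 0 →
      ((x ^ 4 + 4 * y ^ 3 * z) * deriv (fun _ : ℂ => x ^ 3 / y) z
          - y ^ 4 * deriv (fun y' : ℂ => x ^ 3 / y') y)
        + ((5 * x ^ 4 + 4 * x ^ 3 * y) * deriv (fun _ : ℂ => (1 / 5) * x ^ 3 / y) z
          - y ^ 4 * deriv (fun x' : ℂ => (1 / 5) * x' ^ 3 / y) x)
        = c1 * (x ^ 3 * y ^ 2) + c2 * (x ^ 2 * y ^ 3)) := by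
  refine ⟨df_wedge_eta_coeffs_polynomial,
    fun x y z _ => fy_mul_deriv_sub_fz_mul_deriv_eq x y z,
    fun x y z _ => fx_mul_deriv_sub_fz_mul_deriv_eq x y z,
    1, -(3 / 5), one_ne_zero, by norm_num, fun x y z _ => ?_⟩
  rw [fy_mul_deriv_sub_fz_mul_deriv_eq, fx_mul_deriv_sub_fz_mul_deriv_eq]
  ring
end
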